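/- arXiv:2012.05643 — 3 statements merged into one kernel-verified Lean document; each statement's English description precedes it below -/
import Mathlib

section
/- For a matrix P ∈ ℝ^{p×m}, there exists a matrix K ∈ ℝ^{m×p} such that the spectral radius of I − PK is strictly less than 1 if and only if P has full row rank p. -/
/-! A square matrix `M` with spectral radius `< 1` has no eigenvalue `1`, so `1 - M` is invertible.
Applied to `M = I - PK` this makes `PK` invertible, hence `P` has a right inverse and full row
rank. Conversely, full row rank gives a right inverse `K`, and then `I - PK = 0`. -/

open Matrix

/-- Spectral radius of a real square matrix: the spectral radius (in `ℝ≥0∞`) of its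
complexification, i.e. the supremum of the moduli of its complex eigenvalues. -/
noncomputable def specRad {n : Type*} [Fintype n] [DecidableEq n]
    (M : Matrix n n ℝ) : ENNReal :=
  spectralRadius ℂ (M.map Complex.ofReal)

theorem isUnit_one_sub_of_spectralRadius_lt_one {𝕜 A : Type*} [NormedField 𝕜] [Ring A]
    [Algebra 𝕜 A] {a : A} (h : spectralRadius 𝕜 a < 1) : IsUnit (1 - a) := by
  have := spectrum.mem_resolventSet_of_spectralRadius_lt (k := (1 : 𝕜)) (by simpa using h)
  simpa [spectrum.mem_resolventSet_iff] using this

namespace Matrix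

variable {m n K : Type*} [Fintype m] [DecidableEq m] [Fintype n]

theorem isUnit_map_iff [Field K] {L : Type*} [Field L] (f : K →+* L) (M : Matrix m m K) :
    IsUnit (M.map f) ↔ IsUnit M := by
  rw [isUnit_iff_isUnit_det, isUnit_iff_isUnit_det, ← RingHom.mapMatrix_apply, ← RingHom.map_det,
    _root_.isUnit_map_iff]

theorem exists_mul_eq_one_of_isUnit_mul [CommRing K] {A : Matrix m n K} {B : Matrix n m K}
    (h : IsUnit (A * B)) : ∃ C : Matrix n m K, A * C = 1 := by
  obtain ⟨u, hu⟩ := h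
  exact ⟨B * (↑u⁻¹ : Matrix m m K), by rw [← Matrix.mul_assoc, ← hu, Units.mul_inv]⟩

theorem exists_mul_eq_one_iff_rank_eq [Field K] {A : Matrix m n K} :
    (∃ B : Matrix n m K, A * B = 1) ↔ A.rank = Fintype.card m := by
  constructor
  · rintro ⟨B, hAB⟩
    refine A.rank_le_card_height.antisymm ?_
    simpa [hAB] using A.rank_mul_le_left B
  · intro hA
    rw [← mulVec_surjective_iff_exists_right_inverse, ← coe_mulVecLin, ← LinearMap.range_eq_top]
    exact Submodule.eq_top_of_finrank_eq (by simpa [rank] using hA)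

end Matrix

section specRad

variable {n : Type*} [Fintype n] [DecidableEq n]

theorem isUnit_one_sub_of_specRad_lt_one {M : Matrix n n ℝ} (h : specRad M < 1) :
    IsUnit (1 - M) := by
  have h' : IsUnit (1 - M.map Complex.ofReal) := isUnit_one_sub_of_spectralRadius_lt_one h
  rwa [← Matrix.isUnit_map_iff Complex.ofRealHom, ← RingHom.mapMatrix_apply, map_sub, map_one]

@[simp]
theorem specRad_zero : specRad (0 : Matrix n n ℝ) = 0 := by
  simp [specRad]

end specRad

/-- There exists `K` with `ρ(I − PK) < 1` iff `P` has full row rank `p`. -/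
theorem stmt0 (p m : ℕ) (P : Matrix (Fin p) (Fin m) ℝ) :
    (∃ K : Matrix (Fin m) (Fin p) ℝ, specRad (1 - P * K) < 1) ↔ P.rank = p := by
  constructor
  · rintro ⟨K, hK⟩
    have hPK : IsUnit (P * K) := by
      simpa using isUnit_one_sub_of_specRad_lt_one hK
    simpa using exists_mul_eq_one_iff_rank_eq.1 (exists_mul_eq_one_of_isUnit_mul hPK)
  · intro hP
    obtain ⟨K, hK⟩ := (exists_mul_eq_one_iff_rank_eq (A := P)).2 (by simpa using hP)
    exact ⟨K, by simp [hK]⟩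
end

section
/- (Robust LMI criterion) Let M₀, α, β be real matrices of compatible dimensions, Σ with ΣᵀΣ ≤ I (in the Loewner order), and M = M₀ + (perturbation such that QM − QM₀ = βᵀΣα in the relevant block positions, i.e., the inequality [[−Q, (QM)ᵀ],[QM, −Q]] = [[−Q, (QM₀)ᵀ],[QM₀, −Q]] + βᵀΣα + αᵀΣᵀβ holds). If there exist Q ≻ 0 and τ > 0 with [[−Q, (QM₀)ᵀ],[QM₀, −Q]] + τ αᵀα + τ^{-1} βᵀβ ≺ 0, then [[−Q, (QM)ᵀ],[QM, −Q]] ≺ 0 and hence MᵀQM − Q ≺ 0 and ρ(M) < 1. -/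
/-! Completing the square, `τ αᵀα + τ⁻¹ βᵀβ - βᵀΣα - αᵀΣᵀβ` is the sum of the positive semidefinite
matrices `τ⁻¹ (τΣα - β)ᵀ(τΣα - β)` and `τ αᵀ(1 - ΣᵀΣ)α`, so the nominal LMI dominates the perturbed
block matrix, which is therefore negative definite. Testing the block matrix on the vectors
`(x, Mx)` gives the Lyapunov inequality `MᵀQM - Q ≺ 0`. If `Mv = μv` with `v ≠ 0` (over `ℂ`), then
`v*(Q - MᵀQM)v = (1 - |μ|²) v*Qv`, and both quadratic forms are positive, so `|μ| < 1`. -/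

open Matrix

open ComplexOrder

section

variable {m k p : Type*} [Fintype m] [Fintype k] [Fintype p]

theorem posSemidef_smul_add_inv_smul_sub [DecidableEq p] (α : Matrix p m ℝ) (β : Matrix k m ℝ)
    (S : Matrix k p ℝ) (hS : (1 - Sᵀ * S).PosSemidef) {τ : ℝ} (hτ : 0 < τ) :
    (τ • (αᵀ * α) + τ⁻¹ • (βᵀ * β) - (βᵀ * S * α + αᵀ * Sᵀ * β)).PosSemidef := by
  have hsq : (τ⁻¹ • ((τ • (S * α) - β)ᵀ * (τ • (S * α) - β))).PosSemidef :=
    (posSemidef_conjTranspose_mul_self _).smul (inv_pos.mpr hτ).le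
  have hcontr : (τ • (αᵀ * (1 - Sᵀ * S) * α)).PosSemidef :=
    (hS.conjTranspose_mul_mul_same α).smul hτ.le
  convert hsq.add hcontr using 1
  simp only [transpose_sub, transpose_smul, transpose_mul, Matrix.mul_sub, Matrix.sub_mul,
    Matrix.mul_smul, Matrix.smul_mul, smul_sub, smul_smul, Matrix.mul_one, Matrix.mul_assoc]
  rw [inv_mul_cancel_left₀ hτ.ne', inv_mul_cancel₀ hτ.ne', one_smul, one_smul]
  abel

theorem posDef_sub_transpose_mul_mul_of_posDef_fromBlocks [DecidableEq m] {Q M : Matrix m m ℝ}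
    (h : (-fromBlocks (-Q) (Q * M)ᵀ (Q * M) (-Q)).PosDef) : (Q - Mᵀ * Q * M).PosDef := by
  have hQ : Q.IsSymm := by
    rw [fromBlocks_neg, neg_neg] at h
    simpa using (isHermitian_fromBlocks_iff.mp h.1).1
  have hinj : Function.Injective (fromRows (1 : Matrix m m ℝ) M).mulVec := fun x y hxy => by
    simpa [fromRows_mulVec, one_mulVec] using congrArg (fun v => v ∘ Sum.inl) hxy
  convert h.conjTranspose_mul_mul_same hinj using 1
  simp only [Matrix.mul_assoc, conjTranspose_eq_transpose_of_trivial, transpose_fromRows,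
    transpose_one, transpose_mul, hQ.eq, fromBlocks_neg, neg_neg, fromCols_mul_fromBlocks,
    one_mul, mul_neg, neg_add_cancel, fromCols_mul_fromRows, mul_one, zero_mul, add_zero]
  abel

end

theorem spectralRadius_lt_of_forall_lt_of_finite {𝕜 A : Type*} [NormedField 𝕜] [Ring A]
    [Algebra 𝕜 A] {a : A} (hfin : (spectrum 𝕜 a).Finite) {r : NNReal} (hr : 0 < r)
    (h : ∀ k ∈ spectrum 𝕜 a, ‖k‖₊ < r) : spectralRadius 𝕜 a < r := by
  rcases (spectrum 𝕜 a).eq_empty_or_nonempty with hempty | hne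
  · simpa [spectralRadius, hempty] using hr
  obtain ⟨k₀, hk₀, hmax⟩ := Set.exists_max_image _ (fun k => ‖k‖₊) hfin hne
  calc spectralRadius 𝕜 a ≤ ‖k₀‖₊ := iSup₂_le fun k hk => by exact_mod_cast hmax k hk
    _ < r := by exact_mod_cast h k₀ hk₀

section

variable {m : Type*} [Fintype m]

theorem re_star_dotProduct_map_ofReal_mulVec (A : Matrix m m ℝ) (v : m → ℂ) :
    (star v ⬝ᵥ (A.map Complex.ofReal *ᵥ v)).re =
      (fun i => (v i).re) ⬝ᵥ (A *ᵥ fun i => (v i).re) +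
        (fun i => (v i).im) ⬝ᵥ (A *ᵥ fun i => (v i).im) := by
  simp only [dotProduct, mulVec, Complex.re_sum, Finset.mul_sum, ← Finset.sum_add_distrib]
  refine Finset.sum_congr rfl fun i _ => Finset.sum_congr rfl fun j _ => ?_
  simp

theorem Matrix.PosDef.map_ofReal {A : Matrix m m ℝ} (hA : A.PosDef) :
    (A.map Complex.ofReal).PosDef := by
  have hherm : (A.map Complex.ofReal).IsHermitian :=
    hA.1.map _ fun x => (Complex.conj_ofReal x).symm
  refine .of_dotProduct_mulVec_pos hherm fun v hv => RCLike.pos_iff.mpr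
    ⟨?_, hherm.im_star_dotProduct_mulVec_self v⟩
  rw [RCLike.re_to_complex, re_star_dotProduct_map_ofReal_mulVec]
  have hre := hA.posSemidef.dotProduct_mulVec_nonneg fun i => (v i).re
  have him := hA.posSemidef.dotProduct_mulVec_nonneg fun i => (v i).im
  simp only [star_trivial] at hre him
  by_cases h : (fun i => (v i).re) = 0
  · have him' : (fun i => (v i).im) ≠ 0 := fun h' => hv <| funext fun i =>
      Complex.ext (congrFun h i) (congrFun h' i)
    have := hA.dotProduct_mulVec_pos him'
    simp only [star_trivial] at this
    linarith
  · have := hA.dotProduct_mulVec_pos h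
    simp only [star_trivial] at this
    linarith

variable [DecidableEq m]

theorem norm_lt_one_of_mem_spectrum_of_posDef {𝕜 : Type*} [RCLike 𝕜] {P A : Matrix m m 𝕜}
    (hP : P.PosDef) (hL : (P - Aᴴ * P * A).PosDef) {μ : 𝕜} (hμ : μ ∈ spectrum 𝕜 A) :
    ‖μ‖ < 1 := by
  rw [← Matrix.spectrum_toLin', ← Module.End.hasEigenvalue_iff_mem_spectrum] at hμ
  obtain ⟨v, hv⟩ := hμ.exists_hasEigenvector
  have hAv : A *ᵥ v = μ • v := hv.apply_eq_smul
  have hquad : star v ⬝ᵥ ((P - Aᴴ * P * A) *ᵥ v) =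
      ((1 - ‖μ‖ ^ 2 : ℝ) : 𝕜) * (star v ⬝ᵥ (P *ᵥ v)) := by
    have hstar : star v ⬝ᵥ ((Aᴴ * P * A) *ᵥ v) = star (A *ᵥ v) ⬝ᵥ (P *ᵥ (A *ᵥ v)) := by
      rw [Matrix.mul_assoc, ← mulVec_mulVec, ← mulVec_mulVec, dotProduct_mulVec, star_mulVec]
    rw [sub_mulVec, dotProduct_sub, hstar, hAv, mulVec_smul, star_smul, dotProduct_smul,
      smul_dotProduct]
    have hμμ : star μ * μ = ((‖μ‖ ^ 2 : ℝ) : 𝕜) := by simp [RCLike.star_def, RCLike.conj_mul]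
    simp only [smul_eq_mul]
    push_cast at hμμ ⊢
    linear_combination (-(star v ⬝ᵥ (P *ᵥ v))) * hμμ
  have hpos := hL.re_dotProduct_pos hv.2
  rw [hquad, RCLike.re_ofReal_mul] at hpos
  have hg := hP.re_dotProduct_pos hv.2
  exact (sq_lt_one_iff₀ (norm_nonneg μ)).mp (sub_pos.mp (pos_of_mul_pos_left hpos hg.le))

theorem specRad_lt_one_of_posDef {Q M : Matrix m m ℝ} (hQ : Q.PosDef)
    (hL : (Q - Mᵀ * Q * M).PosDef) : specRad M < 1 := by
  have hmap : (Q - Mᵀ * Q * M).map Complex.ofReal =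
      Q.map Complex.ofReal -
        (M.map Complex.ofReal)ᴴ * Q.map Complex.ofReal * M.map Complex.ofReal := by
    ext i j
    simp [Matrix.mul_apply, Finset.sum_mul]
  refine spectralRadius_lt_of_forall_lt_of_finite (Matrix.finite_spectrum _) one_pos
    fun μ hμ => ?_
  have := norm_lt_one_of_mem_spectrum_of_posDef hQ.map_ofReal (hmap ▸ hL.map_ofReal) hμ
  exact_mod_cast this

end

/-- Robust LMI criterion: if `[[−Q,(QM)ᵀ],[QM,−Q]] = [[−Q,(QM₀)ᵀ],[QM₀,−Q]] + βᵀΣα + αᵀΣᵀβ`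
with `ΣᵀΣ ⪯ I`, and there are `Q ≻ 0`, `τ > 0` with
`[[−Q,(QM₀)ᵀ],[QM₀,−Q]] + ταᵀα + τ⁻¹βᵀβ ≺ 0`, then `[[−Q,(QM)ᵀ],[QM,−Q]] ≺ 0`,
`MᵀQM − Q ≺ 0` and `ρ(M) < 1`. -/
theorem stmt13 (n q r : ℕ)
    (Q M M₀ : Matrix (Fin n) (Fin n) ℝ)
    (α : Matrix (Fin r) (Fin n ⊕ Fin n) ℝ)
    (β : Matrix (Fin q) (Fin n ⊕ Fin n) ℝ)
    (S : Matrix (Fin q) (Fin r) ℝ)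
    (hS : (1 - Sᵀ * S).PosSemidef)
    (hQ : Q.PosDef)
    (τ : ℝ) (hτ : 0 < τ)
    (hEq : fromBlocks (-Q) (Q * M)ᵀ (Q * M) (-Q) =
      fromBlocks (-Q) (Q * M₀)ᵀ (Q * M₀) (-Q) + βᵀ * S * α + αᵀ * Sᵀ * β)
    (hLMI : (-(fromBlocks (-Q) (Q * M₀)ᵀ (Q * M₀) (-Q)
        + τ • (αᵀ * α) + τ⁻¹ • (βᵀ * β))).PosDef) :
    (-(fromBlocks (-Q) (Q * M)ᵀ (Q * M) (-Q))).PosDef ∧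
      (-(Mᵀ * Q * M - Q)).PosDef ∧ specRad M < 1 := by
  have hblock : (-(fromBlocks (-Q) (Q * M)ᵀ (Q * M) (-Q))).PosDef := by
    have hsplit : -(fromBlocks (-Q) (Q * M)ᵀ (Q * M) (-Q)) =
        -(fromBlocks (-Q) (Q * M₀)ᵀ (Q * M₀) (-Q) + τ • (αᵀ * α) + τ⁻¹ • (βᵀ * β)) +
          (τ • (αᵀ * α) + τ⁻¹ • (βᵀ * β) - (βᵀ * S * α + αᵀ * Sᵀ * β)) := by
      rw [hEq]
      abel
    rw [hsplit]
    exact hLMI.add_posSemidef (posSemidef_smul_add_inv_smul_sub α β S hS hτ)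
  have hlyap := posDef_sub_transpose_mul_mul_of_posDef_fromBlocks hblock
  exact ⟨hblock, by rwa [neg_sub], specRad_lt_one_of_posDef hQ hlyap⟩
end

section
/- (Zero-plant obstruction) Let P̃₀ ∈ ℝ^{p×p} be invertible, K ∈ ℝ^{p×p} with P̃₀K invertible, L̄ ∈ ℝ^{2p×p}, H̄ ∈ ℝ^{p×p}, F = [0, I] ∈ ℝ^{p×2p}, Ā = [[I,I],[0,I]], C̄ = [I,0]. Then the matrix [[I, H̄F],[L̄P̃₀K, Ā − L̄C̄]] is similar to [[I, P̃₀KH̄F],[0, Ā − L̄C̄ − C̄ᵀP̃₀KH̄F]] via the invertible transformation [[P̃₀K, 0],[−C̄ᵀP̃₀K, I]], and in particular it has 1 as an eigenvalue, so its spectral radius is at least 1. -/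
open Matrix

/-! The transformation `T` intertwines the closed-loop matrix `M` with a block upper triangular
matrix whose upper-left block is the identity, so the characteristic polynomial of `M` has the
factor `(X - 1)^p` and `1` is an eigenvalue of `M`. The intertwining identity only needs
`F C̄ᵀ = 0`, `C̄ C̄ᵀ = I` and `Ā C̄ᵀ = C̄ᵀ`. -/

namespace Matrix

variable {m n R : Type*} [Fintype m] [Fintype n] [DecidableEq m] [DecidableEq n] [CommRing R]

theorem fromBlocks_mul_eq_mul_fromBlocks_of_rightInverse
    (A H : Matrix m m R) (L : Matrix n m R) (Ab : Matrix n n R) (C F : Matrix m n R)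
    (G : Matrix n m R) (hFG : F * G = 0) (hCG : C * G = 1) (hAbG : Ab * G = G) :
    fromBlocks A 0 (-(G * A)) 1 * fromBlocks 1 (H * F) (L * A) (Ab - L * C) =
      fromBlocks 1 (A * H * F) 0 (Ab - L * C - G * A * H * F) *
        fromBlocks A 0 (-(G * A)) 1 := by
  have hFG' : F * (G * A) = 0 := by rw [← Matrix.mul_assoc, hFG, Matrix.zero_mul]
  have hCG' : C * (G * A) = A := by rw [← Matrix.mul_assoc, hCG, Matrix.one_mul]
  have hAbG' : Ab * (G * A) = G * A := by rw [← Matrix.mul_assoc, hAbG]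
  simp only [fromBlocks_multiply, Matrix.mul_one, Matrix.one_mul, Matrix.zero_mul,
    Matrix.mul_zero, add_zero, zero_add, Matrix.mul_neg, Matrix.neg_mul, Matrix.sub_mul,
    Matrix.mul_assoc, hFG', hCG', hAbG', neg_zero]
  congr 1 <;> abel

theorem isUnit_fromBlocks_zero₁₂_one {A : Matrix m m R} (hA : IsUnit A) (B : Matrix n m R) :
    IsUnit (fromBlocks A 0 B (1 : Matrix n n R)) := by
  rw [isUnit_iff_isUnit_det, det_fromBlocks_zero₁₂, det_one, mul_one]
  exact (isUnit_iff_isUnit_det A).mp hA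

theorem isRoot_charpoly_fromBlocks_one [Nonempty m] [Nontrivial R]
    (B : Matrix m n R) (D : Matrix n n R) :
    (fromBlocks (1 : Matrix m m R) B 0 D).charpoly.IsRoot 1 := by
  rw [charpoly_fromBlocks_zero₂₁, charpoly_one]
  simp [Fintype.card_ne_zero]

end Matrix

theorem stmt19_general (p : ℕ) (hp : 0 < p)
    (P0 K Hb : Matrix (Fin p) (Fin p) ℝ)
    (Lb : Matrix (Fin p ⊕ Fin p) (Fin p) ℝ)
    (hPK : IsUnit (P0 * K)) :
    letI Ab : Matrix (Fin p ⊕ Fin p) (Fin p ⊕ Fin p) ℝ := fromBlocks 1 1 0 1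
    letI Cb : Matrix (Fin p) (Fin p ⊕ Fin p) ℝ := fromCols 1 0
    letI F : Matrix (Fin p) (Fin p ⊕ Fin p) ℝ := fromCols 0 1
    letI M : Matrix (Fin p ⊕ (Fin p ⊕ Fin p)) (Fin p ⊕ (Fin p ⊕ Fin p)) ℝ :=
      fromBlocks 1 (Hb * F) (Lb * (P0 * K)) (Ab - Lb * Cb)
    letI T : Matrix (Fin p ⊕ (Fin p ⊕ Fin p)) (Fin p ⊕ (Fin p ⊕ Fin p)) ℝ :=
      fromBlocks (P0 * K) 0 (-(Cbᵀ * (P0 * K))) 1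
    T * M * T⁻¹ =
        fromBlocks 1 (P0 * K * Hb * F) 0 (Ab - Lb * Cb - Cbᵀ * (P0 * K) * Hb * F) ∧
      (1 : ℂ) ∈ spectrum ℂ (M.map Complex.ofReal) ∧
      1 ≤ specRad M := by
  set Ab : Matrix (Fin p ⊕ Fin p) (Fin p ⊕ Fin p) ℝ := fromBlocks 1 1 0 1
  set Cb : Matrix (Fin p) (Fin p ⊕ Fin p) ℝ := fromCols 1 0
  set F : Matrix (Fin p) (Fin p ⊕ Fin p) ℝ := fromCols 0 1
  set M : Matrix (Fin p ⊕ (Fin p ⊕ Fin p)) (Fin p ⊕ (Fin p ⊕ Fin p)) ℝ :=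
    fromBlocks 1 (Hb * F) (Lb * (P0 * K)) (Ab - Lb * Cb)
  set T : Matrix (Fin p ⊕ (Fin p ⊕ Fin p)) (Fin p ⊕ (Fin p ⊕ Fin p)) ℝ :=
    fromBlocks (P0 * K) 0 (-(Cbᵀ * (P0 * K))) 1
  have : Nonempty (Fin p) := ⟨⟨0, hp⟩⟩
  have hT : IsUnit T := isUnit_fromBlocks_zero₁₂_one hPK _
  have hsim : T * M * T⁻¹ =
      fromBlocks 1 (P0 * K * Hb * F) 0 (Ab - Lb * Cb - Cbᵀ * (P0 * K) * Hb * F) := by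
    rw [fromBlocks_mul_eq_mul_fromBlocks_of_rightInverse _ _ _ _ _ _ _
        (by simp [F, Cb, transpose_fromCols, fromCols_mul_fromRows])
        (by simp [Cb, transpose_fromCols, fromCols_mul_fromRows])
        (by simp [Ab, Cb, transpose_fromCols, fromBlocks_mul_fromRows]),
      Matrix.mul_assoc, mul_nonsing_inv _ ((isUnit_iff_isUnit_det T).mp hT), Matrix.mul_one]
  have hroot : M.charpoly.IsRoot 1 := by
    rw [← charpoly_units_conj hT.unit M, IsUnit.unit_spec, hsim]
    exact isRoot_charpoly_fromBlocks_one _ _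
  have hspec : (1 : ℂ) ∈ spectrum ℂ (M.map Complex.ofReal) := by
    have := hroot.map (f := Complex.ofRealHom)
    rw [← charpoly_map, map_one] at this
    exact mem_spectrum_iff_isRoot_charpoly.mpr this
  exact ⟨hsim, hspec, le_iSup₂_of_le (1 : ℂ) hspec (by simp)⟩

/-- Zero-plant obstruction: `[[I, H̄F],[L̄P̃₀K, Ā − L̄C̄]]` is similar via
`T = [[P̃₀K, 0],[−C̄ᵀP̃₀K, I]]` to `[[I, P̃₀KH̄F],[0, Ā − L̄C̄ − C̄ᵀP̃₀KH̄F]]`; in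
particular `1` is an eigenvalue, so the spectral radius is at least `1`. -/
theorem stmt19 (p : ℕ) (hp : 0 < p)
    (P0 K Hb : Matrix (Fin p) (Fin p) ℝ)
    (Lb : Matrix (Fin p ⊕ Fin p) (Fin p) ℝ)
    (hP0 : IsUnit P0) (hPK : IsUnit (P0 * K)) :
    letI Ab : Matrix (Fin p ⊕ Fin p) (Fin p ⊕ Fin p) ℝ := fromBlocks 1 1 0 1
    letI Cb : Matrix (Fin p) (Fin p ⊕ Fin p) ℝ := fromCols 1 0
    letI F : Matrix (Fin p) (Fin p ⊕ Fin p) ℝ := fromCols 0 1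
    letI M : Matrix (Fin p ⊕ (Fin p ⊕ Fin p)) (Fin p ⊕ (Fin p ⊕ Fin p)) ℝ :=
      fromBlocks 1 (Hb * F) (Lb * (P0 * K)) (Ab - Lb * Cb)
    letI T : Matrix (Fin p ⊕ (Fin p ⊕ Fin p)) (Fin p ⊕ (Fin p ⊕ Fin p)) ℝ :=
      fromBlocks (P0 * K) 0 (-(Cbᵀ * (P0 * K))) 1
    T * M * T⁻¹ =
        fromBlocks 1 (P0 * K * Hb * F) 0 (Ab - Lb * Cb - Cbᵀ * (P0 * K) * Hb * F) ∧
      (1 : ℂ) ∈ spectrum ℂ (M.map Complex.ofReal) ∧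
      1 ≤ specRad M :=
  stmt19_general p hp P0 K Hb Lb hPK
end
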